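/- arXiv:math/0404479 — 6 statements merged into one kernel-verified Lean document; each statement's English description precedes it below -/
import Mathlib

section
/- Let (M, ω) be a compact symplectic manifold of dimension 2n which is s-Lefschetz, i.e. the map Lⁿ⁻ᵏ : Hᵏ(M) → H^{2n-k}(M), a ↦ a ∪ [ω]^{n-k}, is surjective for all k ≤ s. Then for every odd integer 2i−1 ≤ s, the Betti number b_{2i−1}(M) = dim H^{2i−1}(M) is even. -/
/-!
For odd `k` the form `(a, a') ↦ p a (f^{n-k} a')` on `H k` is skew-symmetric. It is
nondegenerate because the image of `H k` under `f^{n-k}` contains `H (2n-k)`, against which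
`p` pairs `H k` nondegenerately. A nondegenerate skew form in odd dimension is impossible:
its Gram matrix `M` satisfies `det M = det Mᵀ = det (-M) = -det M`.
-/

open LinearMap (BilinForm)
open scoped Matrix

theorem Matrix.det_eq_zero_of_transpose_eq_neg_of_odd_card {R n : Type*} [CommRing R]
    [IsAddTorsionFree R] [Fintype n] [DecidableEq n] {M : Matrix n n R} (hM : Mᵀ = -M)
    (hn : Odd (Fintype.card n)) : M.det = 0 := by
  rw [← self_eq_neg]
  calc M.det = Mᵀ.det := M.det_transpose.symm
    _ = -M.det := by rw [hM, Matrix.det_neg, hn.neg_one_pow, neg_one_mul]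

theorem LinearMap.BilinForm.even_finrank_of_nondegenerate_of_skew {K W : Type*} [Field K]
    [CharZero K] [AddCommGroup W] [Module K W] [FiniteDimensional K W]
    {B : BilinForm K W} (hnd : B.Nondegenerate) (hskew : ∀ x y, B x y = -B y x) :
    Even (Module.finrank K W) := by
  let b := Module.finBasis K W
  by_contra hodd
  refine (BilinForm.nondegenerate_iff_det_ne_zero b).mp hnd
    (Matrix.det_eq_zero_of_transpose_eq_neg_of_odd_card ?_ ?_)
  · ext i j
    simpa [BilinForm.toMatrix_apply] using hskew (b j) (b i)
  · simpa using hodd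

theorem LinearMap.separatingLeft_compl₁₂_subtype_of_le_map {R V : Type*} [CommRing R]
    [AddCommGroup V] [Module R V] (p : V →ₗ[R] V →ₗ[R] R) (g : V →ₗ[R] V)
    {W W' : Submodule R V} (hp : ∀ x ∈ W, (∀ y ∈ W', p x y = 0) → x = 0)
    (hW' : W' ≤ W.map g) :
    (p.compl₁₂ W.subtype (g ∘ₗ W.subtype)).SeparatingLeft := by
  intro x hx
  refine Subtype.ext (hp x x.2 fun y hy ↦ ?_)
  obtain ⟨z, hz, rfl⟩ := hW' hy
  exact hx ⟨z, hz⟩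

theorem odd_betti_even_of_sLefschetz_general
    {V : Type*} [AddCommGroup V] [Module ℝ V] [FiniteDimensional ℝ V]
    (n s : ℕ) (hs : s ≤ n - 1)
    (H : ℕ → Submodule ℝ V)
    (f : V →ₗ[ℝ] V)
    (p : V →ₗ[ℝ] V →ₗ[ℝ] ℝ)
    (hnd : ∀ k, k ≤ 2 * n → ∀ x ∈ H k, (∀ y ∈ H (2 * n - k), p x y = 0) → x = 0)
    (hskew : ∀ k, Odd k → ∀ x ∈ H k, ∀ y ∈ H k,
      p x ((f ^ (n - k)) y) = - p y ((f ^ (n - k)) x))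
    (hlef : ∀ k, k ≤ s → H (2 * n - k) ≤ Submodule.map (f ^ (n - k)) (H k)) :
    ∀ i : ℕ, 1 ≤ i → 2 * i - 1 ≤ s → Even (Module.finrank ℝ ↥(H (2 * i - 1))) := by
  intro i hi hks
  set k := 2 * i - 1
  have hodd : Odd k := ⟨i - 1, by omega⟩
  let B : BilinForm ℝ (H k) := p.compl₁₂ (H k).subtype ((f ^ (n - k)) ∘ₗ (H k).subtype)
  refine BilinForm.even_finrank_of_nondegenerate_of_skew (B := B) (.ofSeparatingLeft ?_)
    fun x y ↦ hskew k hodd x x.2 y y.2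
  exact LinearMap.separatingLeft_compl₁₂_subtype_of_le_map p _
    (hnd k (by omega)) (hlef k hks)

/-- Abstract formulation of: if a compact symplectic manifold `(M, ω)` of dimension `2n`
is `s`-Lefschetz, then the odd Betti numbers `b_{2i-1}(M)` are even for `2i - 1 ≤ s`.
Here `V` plays the role of the total de Rham cohomology of `M`, `H k` of `Hᵏ(M)`,
`f` of cup product with `[ω]`, and `p` of the Poincaré duality pairing given by
integration of the wedge product.  Skew-symmetry of `⟨a, a'⟩ = ∫_M a ∪ a' ∪ [ω]^{n-k}`
for odd `k` is the hypothesis `hskew`. -/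
theorem odd_betti_even_of_sLefschetz
    {V : Type*} [AddCommGroup V] [Module ℝ V] [FiniteDimensional ℝ V]
    (n s : ℕ) (hs : s ≤ n - 1)
    (H : ℕ → Submodule ℝ V)
    (f : V →ₗ[ℝ] V)
    (hgr : ∀ k, Submodule.map f (H k) ≤ H (k + 2))
    (p : V →ₗ[ℝ] V →ₗ[ℝ] ℝ)
    (hnd : ∀ k, k ≤ 2 * n → ∀ x ∈ H k, (∀ y ∈ H (2 * n - k), p x y = 0) → x = 0)
    (hskew : ∀ k, Odd k → ∀ x ∈ H k, ∀ y ∈ H k,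
      p x ((f ^ (n - k)) y) = - p y ((f ^ (n - k)) x))
    (hlef : ∀ k, k ≤ s → H (2 * n - k) ≤ Submodule.map (f ^ (n - k)) (H k)) :
    ∀ i : ℕ, 1 ≤ i → 2 * i - 1 ≤ s → Even (Module.finrank ℝ ↥(H (2 * i - 1))) :=
  odd_betti_even_of_sLefschetz_general n s hs H f p hnd hskew hlef
end

section
/- Let (M, ω) be a symplectic 2n-manifold, k ≤ n, and α a closed k-form such that α ∧ ω^{n−k+1} = 0 (α is effective). Then α is symplectically harmonic, i.e. dα = 0 and δα = 0. -/
/-- A closed effective `k`-form on a symplectic `2n`-manifold is symplectically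
harmonic.  Abstract model: `Ω k` is the space of `k`-forms, `d` the exterior
differential, `Lw` wedging with `ω`, `star` the symplectic star operator with
`star² = id`, and `δ` the Koszul codifferential, given on `k`-forms by
`δ = (-1)^{k+1} (star ∘ d ∘ star)`.  The Libermann–Marle lemma `hLM` says that an
effective `k`-form `α` (i.e. `α ∧ ω^{n-k+1} = 0`) satisfies `star α = c • α ∧ ω^{n-k}`
for some constant `c`.  Conclusion: if `α ∈ Ωᵏ` is closed and effective, then
`d α = 0` and `δ α = 0`. -/
theorem closed_effective_is_harmonic
    {W : Type*} [AddCommGroup W] [Module ℝ W]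
    (n k : ℕ) (hk : k ≤ n)
    (Ω : ℕ → Submodule ℝ W)
    (d δ Lw star : W →ₗ[ℝ] W)
    (hstar2 : star ∘ₗ star = LinearMap.id)
    (hdL : d ∘ₗ Lw = Lw ∘ₗ d)
    (hδ : ∀ j : ℕ, ∀ x ∈ Ω j, δ x = ((-1 : ℝ)) ^ (j + 1) • star (d (star x)))
    (hLM : ∀ x ∈ Ω k, (Lw ^ (n - k + 1)) x = 0 →
      ∃ c : ℝ, star x = c • (Lw ^ (n - k)) x)
    (α : W) (hα : α ∈ Ω k)
    (hclosed : d α = 0)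
    (heff : (Lw ^ (n - k + 1)) α = 0) :
    d α = 0 ∧ δ α = 0 := by
  refine ⟨hclosed, ?_⟩
  obtain ⟨c, hc⟩ := hLM α hα heff
  have hdL' : ∀ x, d (Lw x) = Lw (d x) := fun x =>
    congrArg (fun f => f x) hdL
  have hcomm : ∀ m : ℕ, ∀ x, d ((Lw ^ m) x) = (Lw ^ m) (d x) := by
    intro m
    induction m with
    | zero => simp
    | succ m ih =>
      intro x
      simp only [pow_succ, Module.End.mul_apply]
      rw [ih, hdL']
  have hd : d (star α) = 0 := by
    rw [hc, map_smul, hcomm, hclosed, map_zero, smul_zero]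
  rw [hδ k α hα, hd, map_zero, smul_zero]
end

section
/- Let M be a compact symplectic 2n-manifold and Z ⊂ M a codimension-2 Donaldson symplectic submanifold, so that ȷ* : Hⁱ(M) → Hⁱ(Z) is an isomorphism for i < n−1 and injective for i = n−1, ȷ*[ω] = [ω_Z], and for i ≥ n a class a ∈ Hⁱ(M) satisfies ȷ* a = 0 iff a ∪ [ω] = 0. Then for every 2 ≤ i ≤ n−1, the restriction map ȷ* maps the primitive classes P_i(M, ω) = {a ∈ Hⁱ(M) : a ∪ [ω]^{n−i+1} = 0} into P_i(Z, ω_Z) = {b ∈ Hⁱ(Z) : b ∪ [ω_Z]^{n−i} = 0}, and ȷ* : P_i(M, ω) → P_i(Z, ω_Z) is an isomorphism for i < n−1 and injective for i = n−1. -/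
/-- Behaviour of primitive cohomology classes under restriction to a codimension-2
Donaldson symplectic submanifold `Z ⊂ M` (`dim M = 2n`, `dim Z = 2n-2`).  Abstract
model: `V`, `V'` are the total de Rham cohomologies of `M` and `Z`, graded by `HM`, `HZ`;
`j` is the restriction `ȷ*`, `fM`, `fZ` are cup product with `[ω]`, `[ω_Z]` respectively,
and `ȷ* ∘ L_{[ω]} = L_{[ω_Z]} ∘ ȷ*` (`hcomm`).  `ȷ*` is an isomorphism in degrees
`< n-1`, injective in degree `n-1`, and for `i ≥ n` a class `a ∈ Hⁱ(M)` restricts to `0`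
iff `a ∪ [ω] = 0`.  Conclusion: for `2 ≤ i ≤ n-1`, `ȷ*` maps the primitive classes
`P_i(M) = HM i ∩ ker fM^{n-i+1}` into `P_i(Z) = HZ i ∩ ker fZ^{n-i}`, injectively, and
`ȷ* : P_i(M) → P_i(Z)` is an isomorphism for `i < n-1`. -/
theorem primitive_classes_restrict
    {V V' : Type*} [AddCommGroup V] [Module ℝ V] [AddCommGroup V'] [Module ℝ V']
    (n : ℕ)
    (HM : ℕ → Submodule ℝ V) (HZ : ℕ → Submodule ℝ V')
    (j : V →ₗ[ℝ] V') (fM : V →ₗ[ℝ] V) (fZ : V' →ₗ[ℝ] V')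
    (hcomm : j ∘ₗ fM = fZ ∘ₗ j)
    (hgrM : ∀ i, Submodule.map fM (HM i) ≤ HM (i + 2))
    (hgrZ : ∀ i, Submodule.map fZ (HZ i) ≤ HZ (i + 2))
    (hgrj : ∀ i, Submodule.map j (HM i) ≤ HZ i)
    (hiso : ∀ i, i < n - 1 → Submodule.map j (HM i) = HZ i ∧
      ∀ a ∈ HM i, j a = 0 → a = 0)
    (hinjmid : ∀ a ∈ HM (n - 1), j a = 0 → a = 0)
    (hker : ∀ i, n ≤ i → ∀ a ∈ HM i, (j a = 0 ↔ fM a = 0)) :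
    ∀ i, 2 ≤ i → i ≤ n - 1 →
      (Submodule.map j (HM i ⊓ LinearMap.ker (fM ^ (n - i + 1)))
        ≤ HZ i ⊓ LinearMap.ker (fZ ^ (n - i))) ∧
      (∀ a ∈ HM i ⊓ LinearMap.ker (fM ^ (n - i + 1)), j a = 0 → a = 0) ∧
      (i < n - 1 → Submodule.map j (HM i ⊓ LinearMap.ker (fM ^ (n - i + 1)))
        = HZ i ⊓ LinearMap.ker (fZ ^ (n - i))) := by
  have h0 : ∀ x, j (fM x) = fZ (j x) := fun x => LinearMap.ext_iff.mp hcomm x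
  have hc : ∀ (k : ℕ) (x : V), j ((fM ^ k) x) = (fZ ^ k) (j x) := by
    intro k
    induction k with
    | zero => intro x; simp
    | succ k ih =>
      intro x
      simp only [pow_succ, Module.End.mul_apply]
      rw [ih (fM x), h0]
  have hmem : ∀ (k i : ℕ), ∀ a ∈ HM i, (fM ^ k) a ∈ HM (i + 2 * k) := by
    intro k
    induction k with
    | zero => intro i a ha; simpa using ha
    | succ k ih =>
      intro i a ha
      have h1 : fM a ∈ HM (i + 2) := hgrM i ⟨a, ha, rfl⟩
      have h2 := ih (i + 2) (fM a) h1
      have : (fM ^ (k + 1)) a = (fM ^ k) (fM a) := by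
        simp [pow_succ, Module.End.mul_apply]
      rw [this]
      convert h2 using 2
      ring
  intro i hi2 hin
  have hn : 3 ≤ n := by omega
  have hideg : n ≤ i + 2 * (n - i) := by omega
  have key : ∀ a ∈ HM i, ((fM ^ (n - i + 1)) a = 0 ↔ (fZ ^ (n - i)) (j a) = 0) := by
    intro a ha
    have hb : (fM ^ (n - i)) a ∈ HM (i + 2 * (n - i)) := hmem _ _ a ha
    have hk := hker _ hideg _ hb
    rw [← hc (n - i) a, hk, pow_succ', Module.End.mul_apply]
  have hsub : Submodule.map j (HM i ⊓ LinearMap.ker (fM ^ (n - i + 1)))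
      ≤ HZ i ⊓ LinearMap.ker (fZ ^ (n - i)) := by
    rintro b ⟨a, ⟨haH, haK⟩, rfl⟩
    exact ⟨hgrj i ⟨a, haH, rfl⟩,
      LinearMap.mem_ker.mpr ((key a haH).mp (LinearMap.mem_ker.mp haK))⟩
  refine ⟨hsub, ?_, ?_⟩
  · rintro a ⟨haH, -⟩ hja
    rcases lt_or_eq_of_le hin with h | h
    · exact (hiso i h).2 a haH hja
    · exact hinjmid a (h ▸ haH) hja
  · intro h
    refine le_antisymm hsub ?_
    rintro b ⟨hbH, hbK⟩
    have : b ∈ Submodule.map j (HM i) := (hiso i h).1 ▸ hbH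
    obtain ⟨a, haH, rfl⟩ := this
    exact ⟨a, ⟨haH, LinearMap.mem_ker.mpr
      ((key a haH).mpr (LinearMap.mem_ker.mp hbK))⟩, rfl⟩
end

section
/- Let M be a compact symplectic 2n-manifold and Z ⊂ M a Donaldson symplectic submanifold of codimension 2. For n ≤ i ≤ 2n−2, set A = ker(L^{i−n+2}_{[ω]} : H^{2n−i−2}_{hr}(M,ω) → H^{i+2}(M)) and B = ker(L^{i−n+1}_{[ω_Z]} : H^{2n−i−2}_{hr}(Z,ω_Z) → Hⁱ(Z)). Assuming ȷ* : H^{j}_{hr}(M,ω) → H^{j}_{hr}(Z,ω_Z) is an isomorphism for j ≤ n−2 and that for classes a of degree ≥ n, ȷ* a = 0 iff a ∪ [ω] = 0, one has H^{i}_{hr}(Z, ω_Z) ≅ H^{i+2}_{hr}(M, ω). -/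
/-- Harmonic cohomology of a codimension-2 Donaldson symplectic submanifold `Z` of a
compact symplectic `2n`-manifold `M` in high degrees: `H^i_{hr}(Z, ω_Z) ≅
H^{i+2}_{hr}(M, ω)` for `n ≤ i ≤ 2n - 2`.  Abstract model: `V`, `V'` are the total
de Rham cohomologies of `M` and `Z`, graded by `HM`, `HZ`, with harmonic subspaces
`HhrM`, `HhrZ`; `j` is the restriction `ȷ*`, `fM`, `fZ` are cup product with `[ω]`,
`[ω_Z]`.  Hypotheses: `ȷ*` intertwines `fM` and `fZ`; `ȷ*` restricts to an isomorphism
`H^j_{hr}(M) → H^j_{hr}(Z)` for `j ≤ n - 2`; for degrees `≥ n`, `ȷ* a = 0` iff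
`a ∪ [ω] = 0`; and the top-degree harmonic cohomology of `M` (dimension `2n`) and of
`Z` (dimension `2n-2`) is the image of the harmonic cohomology under the appropriate
Lefschetz power. -/
theorem harmonic_cohomology_donaldson_high_degrees
    {V V' : Type*} [AddCommGroup V] [Module ℝ V] [AddCommGroup V'] [Module ℝ V']
    [FiniteDimensional ℝ V] [FiniteDimensional ℝ V']
    (n : ℕ) (hn : 2 ≤ n)
    (HM HhrM : ℕ → Submodule ℝ V) (HZ HhrZ : ℕ → Submodule ℝ V')
    (hsubM : ∀ k, HhrM k ≤ HM k) (hsubZ : ∀ k, HhrZ k ≤ HZ k)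
    (j : V →ₗ[ℝ] V') (fM : V →ₗ[ℝ] V) (fZ : V' →ₗ[ℝ] V')
    (hcomm : j ∘ₗ fM = fZ ∘ₗ j)
    (hgrM : ∀ i, Submodule.map fM (HM i) ≤ HM (i + 2))
    (hgrZ : ∀ i, Submodule.map fZ (HZ i) ≤ HZ (i + 2))
    (hgrj : ∀ i, Submodule.map j (HM i) ≤ HZ i)
    (hisohr : ∀ k, k ≤ n - 2 → Submodule.map j (HhrM k) = HhrZ k ∧
      ∀ a ∈ HhrM k, j a = 0 → a = 0)
    (hker : ∀ i, n ≤ i → ∀ a ∈ HM i, (j a = 0 ↔ fM a = 0))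
    (htopM : ∀ k, k ≤ n → HhrM (2 * n - k) = Submodule.map (fM ^ (n - k)) (HhrM k))
    (htopZ : ∀ k, k ≤ n - 1 →
      HhrZ (2 * (n - 1) - k) = Submodule.map (fZ ^ (n - 1 - k)) (HhrZ k)) :
    ∀ i, n ≤ i → i ≤ 2 * n - 2 →
      Nonempty (↥(HhrZ i) ≃ₗ[ℝ] ↥(HhrM (i + 2))) := by

  intro i hni hi2n
  -- set k := 2*n - 2 - i
  set k : ℕ := 2 * n - 2 - i with hk
  have hk2 : k ≤ n - 2 := by omega
  have hk1 : k ≤ n - 1 := by omega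
  have hkn : k ≤ n := by omega
  have hiZ : 2 * (n - 1) - k = i := by omega
  have hiM : 2 * n - k = i + 2 := by omega
  have hnk : n - k = (n - 1 - k) + 1 := by omega
  have hdeg : k + 2 * (n - 1 - k) = i := by omega
  set m : ℕ := n - 1 - k with hm
  -- intertwining for powers
  have hcommPow : ∀ p : ℕ, j ∘ₗ (fM ^ p) = (fZ ^ p) ∘ₗ j := by
    intro p
    induction p with
    | zero => rfl
    | succ p ih =>
      have eM : fM ^ (p + 1) = (fM ^ p) ∘ₗ fM := by rw [pow_succ]; rfl
      have eZ : fZ ^ (p + 1) = (fZ ^ p) ∘ₗ fZ := by rw [pow_succ]; rfl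
      calc j ∘ₗ fM ^ (p + 1) = (j ∘ₗ fM ^ p) ∘ₗ fM := by
              rw [eM, LinearMap.comp_assoc]
        _ = ((fZ ^ p) ∘ₗ j) ∘ₗ fM := by rw [ih]
        _ = (fZ ^ p) ∘ₗ (j ∘ₗ fM) := by rw [LinearMap.comp_assoc]
        _ = (fZ ^ p) ∘ₗ (fZ ∘ₗ j) := by rw [hcomm]
        _ = (fZ ^ (p + 1)) ∘ₗ j := by rw [eZ, LinearMap.comp_assoc]
  -- powers preserve grading
  have hgrMpow : ∀ (p q : ℕ), Submodule.map (fM ^ p) (HM q) ≤ HM (q + 2 * p) := by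
    intro p
    induction p with
    | zero =>
      intro q
      rw [pow_zero, Module.End.one_eq_id, Submodule.map_id]
      simp
    | succ p ih =>
      intro q
      have : (fM ^ (p + 1)) = (fM ^ p) ∘ₗ fM := by rw [pow_succ]; rfl
      rw [this, Submodule.map_comp]
      calc Submodule.map (fM ^ p) (Submodule.map fM (HM q))
          ≤ Submodule.map (fM ^ p) (HM (q + 2)) := Submodule.map_mono (hgrM q)
        _ ≤ HM (q + 2 + 2 * p) := ih (q + 2)
        _ = HM (q + 2 * (p + 1)) := by ring_nf
  -- the key subspace
  set W : Submodule ℝ V := Submodule.map (fM ^ m) (HhrM k) with hW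
  have hWle : W ≤ HM i := by
    calc W ≤ Submodule.map (fM ^ m) (HM k) := Submodule.map_mono (hsubM k)
      _ ≤ HM (k + 2 * m) := hgrMpow m k
      _ = HM i := by rw [hdeg]
  -- HhrZ i = map j W
  have hZeq : HhrZ i = Submodule.map j W := by
    have h1 : HhrZ i = Submodule.map (fZ ^ m) (HhrZ k) := by
      rw [← hiZ]; exact htopZ k hk1
    rw [h1, ← (hisohr k hk2).1, ← Submodule.map_comp, ← hcommPow m, Submodule.map_comp]
  -- HhrM (i+2) = map fM W
  have hMeq : HhrM (i + 2) = Submodule.map fM W := by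
    have h1 : HhrM (i + 2) = Submodule.map (fM ^ (n - k)) (HhrM k) := by
      rw [← hiM]; exact htopM k hkn
    rw [h1, hnk, pow_succ']
    have : fM * fM ^ m = fM ∘ₗ (fM ^ m) := rfl
    rw [this, Submodule.map_comp]
  -- rank equality via equal kernels
  have hrank : Module.finrank ℝ (Submodule.map j W) = Module.finrank ℝ (Submodule.map fM W) := by
    have e1 : Submodule.map j W = LinearMap.range (j ∘ₗ W.subtype) := by
      rw [LinearMap.range_comp, Submodule.range_subtype]
    have e2 : Submodule.map fM W = LinearMap.range (fM ∘ₗ W.subtype) := by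
      rw [LinearMap.range_comp, Submodule.range_subtype]
    have eker : LinearMap.ker (j ∘ₗ W.subtype) = LinearMap.ker (fM ∘ₗ W.subtype) := by
      ext ⟨x, hx⟩
      simp only [LinearMap.mem_ker, LinearMap.comp_apply, Submodule.subtype_apply]
      exact hker i hni x (hWle hx)
    have r1 := LinearMap.finrank_range_add_finrank_ker (j ∘ₗ W.subtype)
    have r2 := LinearMap.finrank_range_add_finrank_ker (fM ∘ₗ W.subtype)
    rw [e1, e2]
    rw [eker] at r1
    omega
  exact ⟨LinearEquiv.ofFinrankEq _ _ (by rw [hZeq, hMeq]; exact hrank)⟩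
end

section
/- Let G be the 3-dimensional Heisenberg group, Γ the integer lattice, and KT = (Γ\G) × S¹ the Kodaira–Thurston manifold, with global invariant 1-forms α, β, γ, η satisfying dα = dβ = dη = 0 and dγ = −α ∧ β. Then ω = α∧γ + β∧η is a symplectic form on KT, and the map L : H¹(KT) → H³(KT), a ↦ a ∪ [ω], is not surjective; hence (KT, ω) is not 1-Lefschetz. -/
/-!
Let `φ` be the linear form on `Λℝ⁴` reading off the coefficient of `β∧γ∧η`. Since `d` raises
degree by one, `φ ∘ d` can only be nonzero on 2-forms, and by the Leibniz rule `d(u∧u')` is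
a combination of `α∧β∧u'` and `u∧α∧β`, which `φ` kills; so `φ` vanishes on exact forms.
The 3-form `β∧γ∧η` is closed with `φ(β∧γ∧η) = 1`, while for a 1-form `x` one has
`dx = -x_γ α∧β` and `φ(x∧ω) = -x_γ`, which is `0` when `x` is closed. Hence `[β∧γ∧η]` is
not of the form `[x∧ω]`. Non-degeneracy is `ω∧ω = -2 α∧β∧γ∧η`.
-/

/-- Degree-1 generators `α = gen 0`, `β = gen 1`, `γ = gen 2`, `η = gen 3` of the
Chevalley–Eilenberg complex of the Kodaira–Thurston Lie algebra, modelled on the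
exterior algebra of `ℝ⁴`. -/
noncomputable abbrev KTgen (i : Fin 4) : ExteriorAlgebra ℝ (Fin 4 → ℝ) :=
  ExteriorAlgebra.ι ℝ (Pi.single i 1)

/-- The degree-`k` part of the exterior algebra of `ℝ⁴`. -/
noncomputable abbrev KTgrade (k : ℕ) : Submodule ℝ (ExteriorAlgebra ℝ (Fin 4 → ℝ)) :=
  (LinearMap.range (ExteriorAlgebra.ι ℝ :
    (Fin 4 → ℝ) →ₗ[ℝ] ExteriorAlgebra ℝ (Fin 4 → ℝ))) ^ k

namespace ExteriorAlgebra

variable {R M N : Type*} [CommRing R] [AddCommGroup M] [Module R M] [AddCommGroup N] [Module R N]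

theorem ι_mul_ι_eq_ιMulti (a b : M) : ι R a * ι R b = ιMulti R 2 ![a, b] := by
  simp [Matrix.vecTail]

theorem ι_mul_ι_mul_ι_eq_ιMulti (a b c : M) :
    ι R a * ι R b * ι R c = ιMulti R 3 ![a, b, c] := by
  simp [Matrix.vecTail, mul_assoc]

theorem ι_mul_ι_mul_ι_mul_ι_eq_ιMulti (a b c e : M) :
    ι R a * ι R b * ι R c * ι R e = ιMulti R 4 ![a, b, c, e] := by
  simp [Matrix.vecTail, mul_assoc]

theorem liftAlternating_eq_zero_of_mem_exteriorPower {m : ℕ} {f : ∀ i, M [⋀^Fin i]→ₗ[R] N}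
    (hf : f m = 0) {x : ExteriorAlgebra R M} (hx : x ∈ ⋀[R]^m M) : liftAlternating f x = 0 := by
  induction m generalizing f x with
  | zero =>
    obtain ⟨r, rfl⟩ := Submodule.mem_one.mp hx
    simp [liftAlternating_algebraMap, hf]
  | succ m ih =>
    rw [exteriorPower, pow_succ'] at hx
    refine Submodule.mul_induction_on hx ?_ fun a b ha hb => by rw [map_add, ha, hb, add_zero]
    rintro _ ⟨v, rfl⟩ y hy
    rw [liftAlternating_ι_mul]
    exact ih (by simp [hf]) hy

theorem comp_eq_zero_of_comp_eq_zero_on_exteriorPower {n : ℕ}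
    {φ : ExteriorAlgebra R M →ₗ[R] N} (hφ : ∀ k ≠ n + 1, ∀ x ∈ ⋀[R]^k M, φ x = 0)
    {d : ExteriorAlgebra R M →ₗ[R] ExteriorAlgebra R M}
    (hd : ∀ k, (⋀[R]^k M).map d ≤ ⋀[R]^(k + 1) M) (hn : ∀ w ∈ ⋀[R]^n M, φ (d w) = 0) :
    φ ∘ₗ d = 0 := by
  refine LinearMap.ext fun z => ?_
  induction z using DirectSum.Decomposition.inductionOn fun i => ⋀[R]^i M with
  | zero => simp
  | @homogeneous k w =>
    rcases eq_or_ne k n with rfl | hk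
    · exact hn w w.2
    · exact hφ (k + 1) (by omega) _ (hd k ⟨w, w.2, rfl⟩)
  | add a b ha hb => simp_all

variable {κ : Type*} {n : ℕ}

/-- For injective `σ`, the coefficient of `e (σ 0) ∧ ⋯ ∧ e (σ (n - 1))`. -/
noncomputable def minorForm (σ : Fin n → κ) : ExteriorAlgebra R (κ → R) →ₗ[R] R :=
  liftAlternating (Pi.single n (Matrix.detRowAlternating.compLinearMap (LinearMap.funLeft R R σ)))

theorem minorForm_ιMulti (σ : Fin n → κ) (v : Fin n → κ → R) :
    minorForm σ (ιMulti R n v) = (Matrix.of fun i j => v i (σ j)).det := by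
  rw [minorForm, liftAlternating_apply_ιMulti, Pi.single_eq_same]
  rfl

theorem minorForm_ιMulti_eq_zero (σ : Fin n → κ) {v : Fin n → κ → R} (i : Fin n)
    (hi : v i ∘ σ = 0) : minorForm σ (ιMulti R n v) = 0 := by
  rw [minorForm_ιMulti]
  exact Matrix.det_eq_zero_of_row_eq_zero i fun j => congrFun hi j

theorem minorForm_eq_zero_of_mem_exteriorPower (σ : Fin n → κ) {k : ℕ} (hk : k ≠ n)
    {x : ExteriorAlgebra R (κ → R)} (hx : x ∈ ⋀[R]^k (κ → R)) : minorForm σ x = 0 :=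
  liftAlternating_eq_zero_of_mem_exteriorPower (Pi.single_eq_of_ne hk _) hx

end ExteriorAlgebra

namespace KodairaThurston

open ExteriorAlgebra

local notation "α" => KTgen 0
local notation "β" => KTgen 1
local notation "γ" => KTgen 2
local notation "η" => KTgen 3
local notation "ω" => α * γ + β * η

variable {d : ExteriorAlgebra ℝ (Fin 4 → ℝ) →ₗ[ℝ] ExteriorAlgebra ℝ (Fin 4 → ℝ)}

theorem ι_mem_KTgrade_one (v : Fin 4 → ℝ) : ι ℝ v ∈ KTgrade 1 := by
  rw [KTgrade, pow_one]
  exact LinearMap.mem_range_self _ _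

theorem d_ι (hα : d α = 0) (hβ : d β = 0) (hη : d η = 0) (hγ : d γ = -(α * β))
    (v : Fin 4 → ℝ) : d (ι ℝ v) = -(v 2 • (α * β)) := by
  have hv : ι ℝ v = ∑ i, v i • KTgen i := by
    conv_lhs => rw [pi_eq_sum_univ' v]
    simp only [map_sum, map_smul]
  simp [hv, Fin.sum_univ_four, hα, hβ, hγ, hη]

theorem d_symplectic_eq_zero (hleib : ∀ x ∈ KTgrade 1, ∀ y, d (x * y) = d x * y - x * d y)
    (hα : d α = 0) (hβ : d β = 0) (hη : d η = 0) (hγ : d γ = -(α * β)) : d ω = 0 := by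
  rw [map_add, hleib _ (ι_mem_KTgrade_one _), hleib _ (ι_mem_KTgrade_one _),
    hα, hβ, hγ, hη]
  simp [← mul_assoc]

theorem minorForm_symplectic_mul_self : minorForm (id : Fin 4 → Fin 4) (ω * ω) = -2 := by
  simp only [add_mul, mul_add, ← mul_assoc, map_add, ι_mul_ι_mul_ι_mul_ι_eq_ιMulti,
    minorForm_ιMulti]
  simp [Matrix.det_succ_row_zero, Fin.sum_univ_succ, Pi.single_apply, Fin.succAbove]
  norm_num

theorem symplectic_mul_self_ne_zero : ω * ω ≠ 0 := fun h => by
  simpa [h] using minorForm_symplectic_mul_self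

theorem coord_two_eq_zero_of_d_ι_eq_zero (hdι : ∀ v, d (ι ℝ v) = -(v 2 • (α * β)))
    {v : Fin 4 → ℝ} (hv : d (ι ℝ v) = 0) : v 2 = 0 := by
  have := congrArg (minorForm ![(0 : Fin 4), 1]) hv
  rw [hdι, map_neg, map_smul, ι_mul_ι_eq_ιMulti, minorForm_ιMulti] at this
  simpa [Matrix.det_fin_two] using this

theorem minorForm_comp_d_eq_zero (hgr : ∀ k, Submodule.map d (KTgrade k) ≤ KTgrade (k + 1))
    (hleib : ∀ x ∈ KTgrade 1, ∀ y, d (x * y) = d x * y - x * d y)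
    (hdι : ∀ v, d (ι ℝ v) = -(v 2 • (α * β))) :
    minorForm ![(1 : Fin 4), 2, 3] ∘ₗ d = 0 := by
  refine comp_eq_zero_of_comp_eq_zero_on_exteriorPower
    (fun k hk x hx => minorForm_eq_zero_of_mem_exteriorPower _ hk hx) hgr fun w hw => ?_
  rw [exteriorPower, pow_two] at hw
  refine Submodule.mul_induction_on hw ?_ fun a b ha hb => by
    rw [map_add, map_add, ha, hb, add_zero]
  rintro _ ⟨u, rfl⟩ _ ⟨u', rfl⟩
  have hα_left : minorForm ![(1 : Fin 4), 2, 3] (α * β * ι ℝ u') = 0 := by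
    rw [ι_mul_ι_mul_ι_eq_ιMulti]
    exact minorForm_ιMulti_eq_zero _ 0 (by ext j; fin_cases j <;> simp)
  have hα_right : minorForm ![(1 : Fin 4), 2, 3] (ι ℝ u * α * β) = 0 := by
    rw [ι_mul_ι_mul_ι_eq_ιMulti]
    exact minorForm_ιMulti_eq_zero _ 1 (by ext j; fin_cases j <;> simp)
  rw [hleib _ (ι_mem_KTgrade_one u), hdι, hdι, neg_mul, mul_neg, smul_mul_assoc, mul_smul_comm,
    ← mul_assoc]
  simp [hα_left, hα_right]

theorem d_βγη_eq_zero (hleib : ∀ x ∈ KTgrade 1, ∀ y, d (x * y) = d x * y - x * d y)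
    (hβ : d β = 0) (hη : d η = 0) (hγ : d γ = -(α * β)) : d (β * γ * η) = 0 := by
  rw [mul_assoc, hleib _ (ι_mem_KTgrade_one _), hleib _ (ι_mem_KTgrade_one _), hβ, hγ, hη,
    mul_zero, zero_mul, zero_sub, sub_zero, neg_mul, mul_neg, neg_neg, ← mul_assoc,
    ← mul_assoc, ι_mul_ι_mul_ι_mul_ι_eq_ιMulti]
  exact ιMulti_eq_zero_of_not_inj fun h => absurd (@h 0 2 rfl) (by decide)

theorem βγη_mem_KTgrade_three : β * γ * η ∈ KTgrade 3 := by
  rw [ι_mul_ι_mul_ι_eq_ιMulti]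
  exact ιMulti_range ℝ 3 ⟨_, rfl⟩

theorem minorForm_βγη : minorForm ![(1 : Fin 4), 2, 3] (β * γ * η) = 1 := by
  rw [ι_mul_ι_mul_ι_eq_ιMulti, minorForm_ιMulti]
  simp [Matrix.det_fin_three]

theorem minorForm_ι_mul_symplectic (v : Fin 4 → ℝ) :
    minorForm ![(1 : Fin 4), 2, 3] (ι ℝ v * ω) = -v 2 := by
  rw [mul_add, ← mul_assoc, ← mul_assoc, map_add, ι_mul_ι_mul_ι_eq_ιMulti,
    ι_mul_ι_mul_ι_eq_ιMulti, minorForm_ιMulti, minorForm_ιMulti]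
  simp [Matrix.det_fin_three]

end KodairaThurston

open ExteriorAlgebra KodairaThurston in
theorem kodaira_thurston_not_one_lefschetz_general
    (d : ExteriorAlgebra ℝ (Fin 4 → ℝ) →ₗ[ℝ] ExteriorAlgebra ℝ (Fin 4 → ℝ))
    (hgr : ∀ k, Submodule.map d (KTgrade k) ≤ KTgrade (k + 1))
    (hleib : ∀ x ∈ KTgrade 1, ∀ y, d (x * y) = d x * y - x * d y)
    (hα : d (KTgen 0) = 0) (hβ : d (KTgen 1) = 0) (hη : d (KTgen 3) = 0)
    (hγ : d (KTgen 2) = -(KTgen 0 * KTgen 1)) :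
    d (KTgen 0 * KTgen 2 + KTgen 1 * KTgen 3) = 0 ∧
    (KTgen 0 * KTgen 2 + KTgen 1 * KTgen 3) *
      (KTgen 0 * KTgen 2 + KTgen 1 * KTgen 3) ≠ 0 ∧
    ¬ (∀ y ∈ KTgrade 3 ⊓ LinearMap.ker d,
        ∃ x ∈ KTgrade 1 ⊓ LinearMap.ker d,
          y - x * (KTgen 0 * KTgen 2 + KTgen 1 * KTgen 3) ∈
            KTgrade 3 ⊓ LinearMap.range d) := by
  refine ⟨d_symplectic_eq_zero hleib hα hβ hη hγ, symplectic_mul_self_ne_zero, fun H => ?_⟩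
  have hdι := d_ι hα hβ hη hγ
  obtain ⟨x, ⟨hx, hx_closed⟩, -, z, hz⟩ :=
    H _ ⟨βγη_mem_KTgrade_three, d_βγη_eq_zero hleib hβ hη hγ⟩
  rw [KTgrade, pow_one] at hx
  obtain ⟨v, rfl⟩ := hx
  have hv : v 2 = 0 := coord_two_eq_zero_of_d_ι_eq_zero hdι hx_closed
  have := congrArg (minorForm ![(1 : Fin 4), 2, 3]) hz
  rw [← LinearMap.comp_apply, minorForm_comp_d_eq_zero hgr hleib hdι, map_sub, minorForm_βγη,
    minorForm_ι_mul_symplectic, hv] at this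
  norm_num at this

/-- On the Kodaira–Thurston manifold `KT` (whose de Rham cohomology is computed, by
Nomizu's theorem, from the Chevalley–Eilenberg complex with `dα = dβ = dη = 0`,
`dγ = -α∧β`), the 2-form `ω = α∧γ + β∧η` is symplectic (closed with `ω∧ω ≠ 0`), and
the map `L : H¹(KT) → H³(KT)`, `a ↦ a ∪ [ω]`, is not surjective; hence `(KT, ω)` is
not 1-Lefschetz. -/
theorem kodaira_thurston_not_one_lefschetz
    (d : ExteriorAlgebra ℝ (Fin 4 → ℝ) →ₗ[ℝ] ExteriorAlgebra ℝ (Fin 4 → ℝ))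
    (hd0 : ∀ x ∈ KTgrade 0, d x = 0)
    (hgr : ∀ k, Submodule.map d (KTgrade k) ≤ KTgrade (k + 1))
    (hleib : ∀ x ∈ KTgrade 1, ∀ y, d (x * y) = d x * y - x * d y)
    (hdd : d ∘ₗ d = 0)
    (hα : d (KTgen 0) = 0) (hβ : d (KTgen 1) = 0) (hη : d (KTgen 3) = 0)
    (hγ : d (KTgen 2) = -(KTgen 0 * KTgen 1)) :
    d (KTgen 0 * KTgen 2 + KTgen 1 * KTgen 3) = 0 ∧
    (KTgen 0 * KTgen 2 + KTgen 1 * KTgen 3) *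
      (KTgen 0 * KTgen 2 + KTgen 1 * KTgen 3) ≠ 0 ∧
    ¬ (∀ y ∈ KTgrade 3 ⊓ LinearMap.ker d,
        ∃ x ∈ KTgrade 1 ⊓ LinearMap.ker d,
          y - x * (KTgen 0 * KTgen 2 + KTgen 1 * KTgen 3) ∈
            KTgrade 3 ⊓ LinearMap.range d) :=
  kodaira_thurston_not_one_lefschetz_general d hgr hleib hα hβ hη hγ
end

section
/- Let (X, Ω) be the 10-dimensional compact symplectic manifold X = M₆ × CP², where M₆ is the 6-dimensional nilmanifold with cohomology as in the paper (b₁ = 3, b₃ = 6, ker(L_{[ω₆]} : H¹ → H³) = ⟨[α₁]⟩, L²_{[ω₆]} : H¹(M₆) → H⁵(M₆) zero) and Ω = ω₆ + ω₀ with ω₀ the Fubini–Study form on CP². Then L⁴_{[Ω]} : H¹(X) → H⁹(X) is the zero map, and ker(L³_{[Ω]} : H¹(X) → H⁷(X)) = ⟨[α₁]⟩ is 1-dimensional; consequently b₃^{hr}(X, Ω) = b₃(X) + 1 − 3 = 7. -/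
/-- Harmonic third Betti number of `X = M₆ × CP²` with `Ω = ω₆ + ω₀` (Example 3.5 of
the paper).  Abstract model via Künneth: `V` is the total cohomology `H*(X)` graded by
`HX`; `f6`, `f0` are cup product with `[ω₆]`, `[ω₀]`, which commute and satisfy
`f0³ = 0` (as `[ω₀]³ = 0` on `CP²`); on `H¹(X) ≅ H¹(M₆)` (of dimension `b₁ = 3`),
`L²_{[ω₆]} = 0` (`h6sq`), the kernel of `L_{[ω₆]}` is spanned by the nonzero class
`a1 = [α₁]` (`hker`), and `f0²` is injective on the Künneth component containing
`f6(H¹)` (`hinj`).  With `b₃(X) = 9` and the formula of Lemma 3.4(i),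
`b₃^{hr} = b₃ + dim ker(L³_{[Ω]} : H¹ → H⁷) − dim ker(L⁴_{[Ω]} : H¹ → H⁹)` (`hform`):
then `L⁴_{[Ω]} : H¹(X) → H⁹(X)` is zero, `ker (L³_{[Ω]} : H¹(X) → H⁷(X)) = ⟨[α₁]⟩`,
and consequently `b₃^{hr}(X, Ω) = 9 + 1 − 3 = 7`. -/
theorem harmonic_b3_of_product_with_CP2
    {V : Type*} [AddCommGroup V] [Module ℝ V] [FiniteDimensional ℝ V]
    (HX : ℕ → Submodule ℝ V)
    (f6 f0 : V →ₗ[ℝ] V)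
    (hcomm : f6 ∘ₗ f0 = f0 ∘ₗ f6)
    (hf0cube : f0 ^ 3 = 0)
    (hgr6 : ∀ k, Submodule.map f6 (HX k) ≤ HX (k + 2))
    (hgr0 : ∀ k, Submodule.map f0 (HX k) ≤ HX (k + 2))
    (h6sq : ∀ x ∈ HX 1, f6 (f6 x) = 0)
    (a1 : V) (ha1 : a1 ∈ HX 1) (ha1ne : a1 ≠ 0) (ha1ker : f6 a1 = 0)
    (hker : ∀ x ∈ HX 1, f6 x = 0 → ∃ c : ℝ, x = c • a1)
    (hinj : ∀ x ∈ HX 1, f0 (f0 (f6 x)) = 0 → f6 x = 0)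
    (hb1 : Module.finrank ℝ ↥(HX 1) = 3)
    (hb3 : Module.finrank ℝ ↥(HX 3) = 9)
    (b3hr : ℕ)
    (hform : b3hr = Module.finrank ℝ ↥(HX 3)
      + Module.finrank ℝ ↥(HX 1 ⊓ LinearMap.ker ((f6 + f0) ^ 3))
      - Module.finrank ℝ ↥(HX 1 ⊓ LinearMap.ker ((f6 + f0) ^ 4))) :
    (∀ x ∈ HX 1, ((f6 + f0) ^ 4) x = 0) ∧
    (∀ x ∈ HX 1, (((f6 + f0) ^ 3) x = 0 ↔ ∃ c : ℝ, x = c • a1)) ∧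
    b3hr = 7 := by
  have hc : ∀ y, f6 (f0 y) = f0 (f6 y) := fun y => LinearMap.congr_fun hcomm y
  have h0 : ∀ y, f0 (f0 (f0 y)) = 0 := fun y => by
    have := LinearMap.congr_fun hf0cube y
    simpa [pow_succ, Module.End.mul_apply] using this
  have happ : ∀ (g : V →ₗ[ℝ] V) (n : ℕ) (y : V), (g ^ (n+1)) y = g ((g ^ n) y) := by
    intro g n y
    rw [pow_succ']
    rfl
  -- explicit iterates on H¹
  have e3 : ∀ x ∈ HX 1, ((f6 + f0) ^ 3) x
      = f0 (f0 (f6 x)) + f0 (f0 (f6 x)) + f0 (f0 (f6 x)) := by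
    intro x hx
    have h2 : f6 (f6 x) = 0 := h6sq x hx
    have : ((f6 + f0) ^ 3) x = (f6 + f0) ((f6 + f0) ((f6 + f0) (((f6 + f0) ^ 0) x))) := by
      rw [happ, happ, happ]
    rw [this]
    simp only [pow_zero, Module.End.one_apply, LinearMap.add_apply, map_add, hc, h2,
      map_zero, h0, zero_add, add_zero]
    abel
  have e4 : ∀ x ∈ HX 1, ((f6 + f0) ^ 4) x = 0 := by
    intro x hx
    have h2 : f6 (f6 x) = 0 := h6sq x hx
    have : ((f6 + f0) ^ 4) x = (f6 + f0) (((f6 + f0) ^ 3) x) := happ _ 3 x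
    rw [this, e3 x hx]
    simp only [LinearMap.add_apply, map_add, hc, h2, map_zero, h0, zero_add, add_zero]
  have key3 : ∀ x ∈ HX 1, (((f6 + f0) ^ 3) x = 0 ↔ ∃ c : ℝ, x = c • a1) := by
    intro x hx
    constructor
    · intro h
      rw [e3 x hx] at h
      have h3 : (3 : ℝ) • f0 (f0 (f6 x)) = 0 := by
        rw [show (3:ℝ) • f0 (f0 (f6 x)) = f0 (f0 (f6 x)) + f0 (f0 (f6 x)) + f0 (f0 (f6 x)) by
          module]
        exact h
      have hv : f0 (f0 (f6 x)) = 0 := by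
        have := smul_eq_zero.mp h3
        simpa using this
      exact hker x hx (hinj x hx hv)
    · rintro ⟨c, rfl⟩
      rw [map_smul, e3 a1 ha1, ha1ker]
      simp
  refine ⟨e4, key3, ?_⟩
  have hker3 : HX 1 ⊓ LinearMap.ker ((f6 + f0) ^ 3) = Submodule.span ℝ {a1} := by
    apply le_antisymm
    · rintro x ⟨hx1, hxk⟩
      rcases (key3 x hx1).mp hxk with ⟨c, rfl⟩
      exact Submodule.smul_mem _ _ (Submodule.mem_span_singleton_self a1)
    · rw [Submodule.span_singleton_le_iff_mem]
      exact ⟨ha1, (key3 a1 ha1).mpr ⟨1, (one_smul ℝ a1).symm⟩⟩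
  have hker4 : HX 1 ⊓ LinearMap.ker ((f6 + f0) ^ 4) = HX 1 := by
    rw [inf_eq_left]
    intro x hx
    exact e4 x hx
  rw [hform, hb3, hker3, hker4, hb1, finrank_span_singleton ha1ne]
end
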